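/- For every hyperbolic component W of period n, every multiplier parametrization Φ of W, and every h ∈ ℝ, the internal ray Γ_{W,h} tends to infinity as t → −∞: ‖Γ_{W,h}(t)‖ → ∞ as t → −∞. -/

import Mathlib

open Complex Set Filter Topology

noncomputable section

/-- The exponential map `E_κ(z) = e^z + κ`. -/
def expMap (κ : ℂ) : ℂ → ℂ := fun z => Complex.exp z + κ

/-- `z` is a periodic point of `E_κ` of exact period `n ≥ 1`. -/
def IsExactlyPeriodic (κ : ℂ) (n : ℕ) (z : ℂ) : Prop :=
  0 < n ∧ (expMap κ)^[n] z = z ∧ ∀ m : ℕ, 0 < m → m < n → (expMap κ)^[m] z ≠ z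

/-- The multiplier of the orbit of `z` of period `n` under `E_κ`:
`∏_{j=0}^{n-1} exp(E_κ^∘j(z))`. -/
def multiplier (κ : ℂ) (n : ℕ) (z : ℂ) : ℂ :=
  ∏ j ∈ Finset.range n, Complex.exp ((expMap κ)^[j] z)

/-- `E_κ` has an attracting periodic orbit of (exact) period `n`. -/
def HasAttractingOrbit (κ : ℂ) (n : ℕ) : Prop :=
  ∃ z : ℂ, IsExactlyPeriodic κ n z ∧ ‖multiplier κ n z‖ < 1

/-- The hyperbolic locus of period `n`. -/
def Hyp (n : ℕ) : Set ℂ := {κ : ℂ | HasAttractingOrbit κ n}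

/-- `W` is a hyperbolic component of period `n`: a connected component of `Hyp n`. -/
def IsHyperbolicComponent (n : ℕ) (W : Set ℂ) : Prop :=
  1 ≤ n ∧ ∃ κ ∈ Hyp n, W = connectedComponentIn (Hyp n) κ

/-- A multiplier parametrization of a hyperbolic component `W` of period `n`:
a biholomorphic map `Φ : W → ℍ⁻` such that the attracting orbit of `E_κ` has
multiplier `exp (Φ κ)` for all `κ ∈ W`. -/
def IsMultiplierParam (n : ℕ) (W : Set ℂ) (Φ : ℂ → ℂ) : Prop :=
  Set.BijOn Φ W {z : ℂ | z.re < 0} ∧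
  DifferentiableOn ℂ Φ W ∧
  DifferentiableOn ℂ (Function.invFunOn Φ W) {z : ℂ | z.re < 0} ∧
  ∀ κ ∈ W, ∃ z : ℂ, IsExactlyPeriodic κ n z ∧ ‖multiplier κ n z‖ < 1 ∧
    multiplier κ n z = Complex.exp (Φ κ)

/-- The internal ray of `W` at height `h` (with respect to the multiplier
parametrization `Φ`): `Γ(t) = Φ⁻¹(t + 2πih)` for `t < 0`. -/
def IsInternalRay (W : Set ℂ) (Φ : ℂ → ℂ) (h : ℝ) (Γ : ℝ → ℂ) : Prop :=
  ∀ t : ℝ, t < 0 → Γ t ∈ W ∧ Φ (Γ t) = (t : ℂ) + (2 * Real.pi * h : ℝ) * Complex.I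

/-- `F(t) = e^t - 1`. -/
def F : ℝ → ℝ := fun t => Real.exp t - 1

/-- A bounded external address (entries indexed from 0; `s 0` is `s₁`). -/
def BoundedAddr (s : ℕ → ℤ) : Prop := ∃ B : ℕ, ∀ n : ℕ, |s n| ≤ (B : ℤ)

/-- The shift map `σ` on external addresses. -/
def shiftAddr (s : ℕ → ℤ) : ℕ → ℤ := fun n => s (n + 1)

/-- Concatenation `k·s`. -/
def consAddr (k : ℤ) (s : ℕ → ℤ) : ℕ → ℤ := fun n =>
  match n with
  | 0 => k
  | m + 1 => s m

/-- Lexicographic (strict) order on external addresses. -/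
def lexLt (s s' : ℕ → ℤ) : Prop := ∃ n : ℕ, (∀ m : ℕ, m < n → s m = s' m) ∧ s n < s' n

/-- A periodic external address. -/
def PeriodicAddr (s : ℕ → ℤ) : Prop := ∃ p : ℕ, 0 < p ∧ ∀ n : ℕ, s (n + p) = s n

/-- `G` is the parameter ray at external address `s`: an injective C¹ curve
`(0,∞) → ℂ∖{0}` such that for `κ = G t`, the singular orbit escapes with
`E_κ^∘n(κ) - F^∘n(t) - 2πi s_{n+1} → 0` as `n → ∞`. -/
def IsParamRay (s : ℕ → ℤ) (G : ℝ → ℂ) : Prop :=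
  Set.InjOn G (Set.Ioi 0) ∧
  ContDiffOn ℝ 1 G (Set.Ioi 0) ∧
  (∀ t ∈ Set.Ioi (0 : ℝ), G t ≠ 0) ∧
  ∀ t ∈ Set.Ioi (0 : ℝ),
    Tendsto (fun n : ℕ =>
        (expMap (G t))^[n] (G t) - (F^[n] t : ℂ) - (2 * Real.pi : ℝ) * Complex.I * (s n : ℂ))
      atTop (nhds 0)

/-- The parameter ray `G` lands at `κ₀`. -/
def LandsAt (G : ℝ → ℂ) (κ₀ : ℂ) : Prop :=
  Tendsto G (nhdsWithin 0 (Set.Ioi 0)) (nhds κ₀)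

/-- Iterated bound `(x ↦ e^x + M)^[k] (M+1)`. -/
def gIter (M : ℝ) (k : ℕ) : ℝ := (fun x => Real.exp x + M)^[k] (M + 1)

lemma gIter_mono (M : ℝ) (hM : 0 ≤ M) : Monotone (gIter M) := by
  apply monotone_nat_of_le_succ
  intro k
  have hmono : Monotone (fun x => Real.exp x + M) := fun a b hab => by
    simpa using Real.exp_le_exp.2 hab
  have h1 : (M + 1 : ℝ) ≤ Real.exp (M + 1) + M := by
    have := Real.add_one_le_exp (M + 1)
    linarith
  calc gIter M k = (fun x => Real.exp x + M)^[k] (M + 1) := rfl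
    _ ≤ (fun x => Real.exp x + M)^[k] (Real.exp (M + 1) + M) := hmono.iterate k h1
    _ = gIter M (k + 1) := by
        rw [gIter, Function.iterate_succ_apply]

lemma key_bound (κ z : ℂ) (n : ℕ) (hn : 1 ≤ n)
    (hper : (expMap κ)^[n] z = z) (M t : ℝ) (hM : 0 ≤ M)
    (hκ : ‖κ‖ ≤ M) (ht : t < 0)
    (hmult : ‖multiplier κ n z‖ = Real.exp t) :
    -((n : ℝ) * gIter M (2 * n)) ≤ t := by
  set zj : ℕ → ℂ := fun j => (expMap κ)^[j] z with hzj
  -- sum of real parts equals t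
  have habs : ‖multiplier κ n z‖
      = Real.exp (∑ j ∈ Finset.range n, (zj j).re) := by
    rw [multiplier, norm_prod, Real.exp_sum]
    exact Finset.prod_congr rfl fun j _ => Complex.norm_exp _
  have hsum : ∑ j ∈ Finset.range n, (zj j).re = t :=
    Real.exp_injective (by rw [← habs, hmult])
  -- some orbit point has very negative real part
  have hnpos : (0 : ℝ) < n := by exact_mod_cast hn
  have hex : ∃ j ∈ Finset.range n, (zj j).re ≤ t / n := by
    apply Finset.exists_le_of_sum_le ⟨0, Finset.mem_range.2 hn⟩
    rw [hsum, Finset.sum_const, Finset.card_range, nsmul_eq_mul]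
    field_simp
    exact le_rfl
  obtain ⟨j, hjmem, hjre⟩ := hex
  have hjn : j < n := Finset.mem_range.1 hjmem
  -- periodicity of zj
  have hp : ∀ m : ℕ, zj (m + n) = zj m := by
    intro m
    simp only [hzj]
    rw [Function.iterate_add_apply, hper]
  -- all later orbit points are bounded
  have hstep : ∀ w : ℂ, ‖expMap κ w‖ ≤ Real.exp (‖w‖) + M := by
    intro w
    calc ‖expMap κ w‖ ≤ ‖Complex.exp w‖ + ‖κ‖ :=
          norm_add_le _ _
      _ ≤ Real.exp (‖w‖) + M := by
          rw [Complex.norm_exp]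
          exact add_le_add (Real.exp_le_exp.2 (Complex.re_le_norm w)) hκ
  have hbound : ∀ k : ℕ, ‖zj (j + 1 + k)‖ ≤ gIter M k := by
    intro k
    induction k with
    | zero =>
        have : zj (j + 1) = expMap κ (zj j) := by
          simp only [hzj]
          rw [Function.iterate_succ_apply']
        rw [this]
        calc ‖expMap κ (zj j)‖
            ≤ ‖Complex.exp (zj j)‖ + ‖κ‖ := norm_add_le _ _
          _ ≤ 1 + M := by
              rw [Complex.norm_exp]
              refine add_le_add ?_ hκ
              rw [← Real.exp_zero]
              exact Real.exp_le_exp.2 (le_trans hjre (le_of_lt (div_neg_of_neg_of_pos ht hnpos)))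
          _ = gIter M 0 := by rw [gIter]; simp; ring
    | succ k ih =>
        have : zj (j + 1 + (k + 1)) = expMap κ (zj (j + 1 + k)) := by
          simp only [hzj]
          rw [← Nat.add_assoc, Function.iterate_succ_apply']
        rw [this]
        calc ‖expMap κ (zj (j + 1 + k))‖
            ≤ Real.exp (‖zj (j + 1 + k)‖) + M := hstep _
          _ ≤ Real.exp (gIter M k) + M := by
              exact add_le_add (Real.exp_le_exp.2 ih) le_rfl
          _ = gIter M (k + 1) := by simp only [gIter]; rw [Function.iterate_succ_apply']
  -- every orbit point in the cycle is bounded by gIter M (2n)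
  have hall : ∀ i ∈ Finset.range n, -(gIter M (2 * n)) ≤ (zj i).re := by
    intro i hi
    have hin : i < n := Finset.mem_range.1 hi
    have hk : j + 1 + (i + n - (j + 1)) = i + n := by omega
    have hkle : i + n - (j + 1) ≤ 2 * n := by omega
    have h1 : ‖zj i‖ ≤ gIter M (2 * n) := by
      calc ‖zj i‖ = ‖zj (i + n)‖ := by rw [hp i]
        _ = ‖zj (j + 1 + (i + n - (j + 1)))‖ := by rw [hk]
        _ ≤ gIter M (i + n - (j + 1)) := hbound _
        _ ≤ gIter M (2 * n) := gIter_mono M hM hkle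
    calc -(gIter M (2 * n)) ≤ -(‖zj i‖) := by linarith
      _ ≤ (zj i).re := (abs_le.1 (Complex.abs_re_le_norm _)).1
  calc -((n : ℝ) * gIter M (2 * n))
      = ∑ _i ∈ Finset.range n, -(gIter M (2 * n)) := by
        rw [Finset.sum_const, Finset.card_range, nsmul_eq_mul]; ring
    _ ≤ ∑ i ∈ Finset.range n, (zj i).re := Finset.sum_le_sum hall
    _ = t := hsum

/-- Every internal ray tends to infinity as `t → -∞`. -/
theorem internal_ray_tendsto_infinity_atBot
    (n : ℕ) (hn : 1 ≤ n) (W : Set ℂ) (hW : IsHyperbolicComponent n W)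
    (Φ : ℂ → ℂ) (hΦ : IsMultiplierParam n W Φ)
    (h : ℝ) (Γ : ℝ → ℂ) (hΓ : IsInternalRay W Φ h Γ) :
    Tendsto (fun t : ℝ => ‖Γ t‖) atBot atTop := by
  rw [Filter.tendsto_atTop]
  intro b
  rw [Filter.eventually_atBot]
  set M : ℝ := max b 0 with hMdef
  have hM : 0 ≤ M := le_max_right _ _
  refine ⟨min (-1) (-((n : ℝ) * gIter M (2 * n)) - 1), fun t ht => ?_⟩
  have ht0 : t < 0 := lt_of_le_of_lt (le_trans ht (min_le_left _ _)) (by norm_num)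
  have htM : t < -((n : ℝ) * gIter M (2 * n)) :=
    lt_of_le_of_lt (le_trans ht (min_le_right _ _)) (by linarith)
  obtain ⟨hmem, hΦΓ⟩ := hΓ t ht0
  obtain ⟨z, hzper, _, hzmult⟩ := hΦ.2.2.2 (Γ t) hmem
  by_contra hb
  push_neg at hb
  have hκM : ‖Γ t‖ ≤ M := le_trans (le_of_lt hb) (le_max_left _ _)
  have hmult : ‖multiplier (Γ t) n z‖ = Real.exp t := by
    rw [hzmult, hΦΓ, Complex.norm_exp]
    congr 1
    simp [Complex.add_re, Complex.ofReal_re, Complex.mul_re, Complex.I_re, Complex.I_im,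
      Complex.ofReal_im]
  have := key_bound (Γ t) z n hn hzper.2.1 M t hM hκM ht0 hmult
  linarith
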